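/- For a channel Λ = ∏_P Γ_P^{λ_P} (product over a finite set of distinct nontrivial n-qubit Paulis), writing Λ(ρ) = ∑_{P,Q} c_{P,Q} PρQ in the Pauli basis, the coefficient c_{I,I} satisfies c_{I,I} ≥ ∏_P (1 - ω_P) = ∏_P (1 + e^{-2λ_P})/2, and hence c_{I,I} ≥ exp(-∑_P λ_P). -/

import Mathlib

open Matrix

noncomputable section

/-- The single-qubit Pauli matrices `I, X, Y, Z`. -/
def pauli : Fin 4 → Matrix (Fin 2) (Fin 2) ℂ
  | 0 => 1
  | 1 => !![0, 1; 1, 0]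
  | 2 => !![0, -Complex.I; Complex.I, 0]
  | 3 => !![1, 0; 0, -1]

/-- The `n`-qubit Pauli operator labelled by `f : Fin n → Fin 4`. -/
def PauliOp {n : ℕ} (f : Fin n → Fin 4) : Matrix (Fin n → Fin 2) (Fin n → Fin 2) ℂ :=
  Matrix.of fun i j => ∏ k, pauli (f k) (i k) (j k)

/-- The Pauli noise channel `Γ_P^λ` as a linear endomorphism,
`Γ_P^λ(ρ) = (1-ω)ρ + ω PρP`, `ω = (1-e^{-2λ})/2`. -/
def GammaL {n : ℕ} (f : Fin n → Fin 4) (lam : ℝ) :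
    Module.End ℂ (Matrix (Fin n → Fin 2) (Fin n → Fin 2) ℂ) :=
  ((1 - (1 - Real.exp (-2 * lam)) / 2 : ℝ) : ℂ) • LinearMap.id +
    (((1 - Real.exp (-2 * lam)) / 2 : ℝ) : ℂ) •
      ((LinearMap.mulLeft ℂ (PauliOp f)).comp (LinearMap.mulRight ℂ (PauliOp f)))

/-- The identity-identity coefficient `c_{I,I}` of the Pauli-basis expansion
`Λ(ρ) = ∑_{P,Q} c_{P,Q} P ρ Q`, extracted as `d^{-3} ∑_B Tr(B Λ(B))` over the Pauli basis,
which equals the process fidelity of `Λ` with the identity channel. -/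
def cII {n : ℕ}
    (Lam : Matrix (Fin n → Fin 2) (Fin n → Fin 2) ℂ →
      Matrix (Fin n → Fin 2) (Fin n → Fin 2) ℂ) : ℂ :=
  ((2 ^ n : ℂ) ^ 3)⁻¹ * ∑ f : Fin n → Fin 4, (PauliOp f * Lam (PauliOp f)).trace

/-! Every Pauli operator `Q` is an eigenvector of every `Γ_P^λ`, with eigenvalue `1` or
`e^{-2λ}` according as `Q` commutes or anticommutes with `P`; hence `c_{I,I}` is the average over
`Q` of the product of these eigenvalues. Writing each eigenvalue as `(1-ω) + ω χ_P(Q)` with a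
character `χ_P = ±1` of the Pauli group modulo phases and expanding the product, every term
averages to something nonnegative (a character sums to `0` or to the group order), and the empty
term contributes `∏ (1-ω_P)`. -/

/-- `-1` if the single-qubit Paulis `a` and `b` anticommute, `1` if they commute. -/
def pauliSign (a b : Fin 4) : ℝ := if a ≠ 0 ∧ b ≠ 0 ∧ a ≠ b then -1 else 1

lemma pauliSign_zero_right (a : Fin 4) : pauliSign a 0 = 1 := by simp [pauliSign]

-- `^^^` on the labels is multiplication of Paulis up to phase.
lemma pauliSign_xor_right (a b c : Fin 4) :
    pauliSign a (b ^^^ c) = pauliSign a b * pauliSign a c := by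
  fin_cases a <;> fin_cases b <;> fin_cases c <;> norm_num [pauliSign] <;> decide

lemma sum_pauliSign_nonneg (b : Fin 4) : 0 ≤ ∑ a, pauliSign a b := by
  fin_cases b <;> simp [Fin.sum_univ_four, pauliSign]

lemma exists_prod_pauliSign_eq {ι : Type*} (t : Finset ι) (b : ι → Fin 4) :
    ∃ c, ∀ a, ∏ i ∈ t, pauliSign a (b i) = pauliSign a c := by
  induction t using Finset.cons_induction with
  | empty => exact ⟨0, fun a => by rw [Finset.prod_empty, pauliSign_zero_right]⟩
  | cons j t hj ih =>
    obtain ⟨c, hc⟩ := ih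
    exact ⟨b j ^^^ c, fun a => by rw [Finset.prod_cons, hc, pauliSign_xor_right]⟩

lemma sum_prod_pauliSign_nonneg {ι : Type*} (t : Finset ι) (b : ι → Fin 4) :
    0 ≤ ∑ a, ∏ i ∈ t, pauliSign a (b i) := by
  obtain ⟨c, hc⟩ := exists_prod_pauliSign_eq t b
  simpa only [hc] using sum_pauliSign_nonneg c

lemma pauli_mul_self (a : Fin 4) : pauli a * pauli a = 1 := by
  fin_cases a <;>
    · ext i j
      fin_cases i <;> fin_cases j <;>
        simp [pauli, Matrix.mul_apply, Fin.sum_univ_two, Matrix.one_apply]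

lemma pauli_mul_mul_self (a b : Fin 4) :
    pauli b * pauli a * pauli b = (pauliSign a b : ℂ) • pauli a := by
  fin_cases a <;> fin_cases b <;>
    · ext i j
      fin_cases i <;> fin_cases j <;>
        simp [pauli, pauliSign, Matrix.mul_apply, Fin.sum_univ_two]

def pauliOpSign {n : ℕ} (g p : Fin n → Fin 4) : ℝ := ∏ k, pauliSign (g k) (p k)

lemma sum_prod_pauliOpSign_nonneg {n : ℕ} {ι : Type*} (t : Finset ι) (p : ι → Fin n → Fin 4) :
    0 ≤ ∑ g : Fin n → Fin 4, ∏ i ∈ t, pauliOpSign g (p i) := by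
  classical
  have hfactor : ∑ g : Fin n → Fin 4, ∏ i ∈ t, pauliOpSign g (p i)
      = ∏ k, ∑ a, ∏ i ∈ t, pauliSign a (p i k) := by
    rw [Finset.prod_univ_sum, Fintype.piFinset_univ]
    exact Finset.sum_congr rfl fun g _ => Finset.prod_comm
  rw [hfactor]
  exact Finset.prod_nonneg fun k _ => sum_prod_pauliSign_nonneg t fun i => p i k

def piKronecker {κ α R : Type*} [Fintype κ] [CommMonoid R] (A : κ → Matrix α α R) :
    Matrix (κ → α) (κ → α) R :=
  Matrix.of fun i j => ∏ k, A k (i k) (j k)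

section piKronecker

variable {κ α R : Type*} [Fintype κ] [CommSemiring R]

lemma piKronecker_mul [DecidableEq κ] [Fintype α] (A B : κ → Matrix α α R) :
    piKronecker A * piKronecker B = piKronecker fun k => A k * B k := by
  ext i j
  simp only [piKronecker, Matrix.of_apply, Matrix.mul_apply]
  rw [Finset.prod_univ_sum, Fintype.piFinset_univ]
  exact Finset.sum_congr rfl fun x _ => Finset.prod_mul_distrib.symm

lemma piKronecker_smul (c : κ → R) (A : κ → Matrix α α R) :
    (piKronecker fun k => c k • A k) = (∏ k, c k) • piKronecker A := by
  ext i j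
  simp [piKronecker, Finset.prod_mul_distrib]

lemma piKronecker_one [DecidableEq α] :
    (piKronecker fun _ : κ => (1 : Matrix α α R)) = 1 := by
  ext i j
  simp only [piKronecker, Matrix.of_apply, Matrix.one_apply, Finset.prod_boole]
  simp [funext_iff]

end piKronecker

lemma PauliOp_eq_piKronecker {n : ℕ} (f : Fin n → Fin 4) :
    PauliOp f = piKronecker fun k => pauli (f k) := rfl

lemma PauliOp_mul_self {n : ℕ} (f : Fin n → Fin 4) : PauliOp f * PauliOp f = 1 := by
  simp only [PauliOp_eq_piKronecker, piKronecker_mul, pauli_mul_self, piKronecker_one]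

lemma PauliOp_mul_mul_self {n : ℕ} (g p : Fin n → Fin 4) :
    PauliOp p * PauliOp g * PauliOp p = (pauliOpSign g p : ℂ) • PauliOp g := by
  simp only [PauliOp_eq_piKronecker, piKronecker_mul, pauli_mul_mul_self, piKronecker_smul,
    pauliOpSign, Complex.ofReal_prod]

lemma trace_PauliOp_mul_self {n : ℕ} (f : Fin n → Fin 4) :
    (PauliOp f * PauliOp f).trace = 2 ^ n := by
  simp [PauliOp_mul_self]

lemma GammaL_apply_PauliOp {n : ℕ} (p : Fin n → Fin 4) (l : ℝ) (g : Fin n → Fin 4) :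
    GammaL p l (PauliOp g)
      = (((1 + Real.exp (-2 * l)) / 2 + (1 - Real.exp (-2 * l)) / 2 * pauliOpSign g p : ℝ) : ℂ)
          • PauliOp g := by
  simp only [GammaL, LinearMap.add_apply, LinearMap.smul_apply, LinearMap.id_apply,
    LinearMap.comp_apply, LinearMap.mulLeft_apply, LinearMap.mulRight_apply]
  rw [← mul_assoc, PauliOp_mul_mul_self, smul_smul, ← add_smul]
  push_cast
  ring_nf

lemma cII_eq_of_apply_PauliOp_eq_smul {n : ℕ}
    (Lam : Matrix (Fin n → Fin 2) (Fin n → Fin 2) ℂ → Matrix (Fin n → Fin 2) (Fin n → Fin 2) ℂ)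
    (c : (Fin n → Fin 4) → ℝ) (hc : ∀ g, Lam (PauliOp g) = (c g : ℂ) • PauliOp g) :
    cII Lam = (((4 : ℝ) ^ n)⁻¹ * ∑ g, c g : ℝ) := by
  have htrace : ∀ g, (PauliOp g * Lam (PauliOp g)).trace = c g * 2 ^ n := fun g => by
    rw [hc, Matrix.mul_smul, Matrix.trace_smul, trace_PauliOp_mul_self, smul_eq_mul]
  simp only [cII, htrace, ← Finset.sum_mul]
  push_cast
  rw [show (4 : ℂ) ^ n = 2 ^ n * 2 ^ n by rw [← mul_pow]; norm_num]
  field_simp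

lemma Finset.noncommProd_apply_of_forall_eq_smul {ι R M : Type*} [CommSemiring R]
    [AddCommMonoid M] [Module R M] (s : Finset ι) (Γ : ι → Module.End R M) (hcomm) (x : M)
    (c : ι → R) (hc : ∀ i ∈ s, Γ i x = c i • x) :
    s.noncommProd Γ hcomm x = (∏ i ∈ s, c i) • x := by
  induction s using Finset.cons_induction with
  | empty => simp
  | cons a t ha ih =>
    rw [Finset.noncommProd_cons, Finset.prod_cons, Module.End.mul_apply,
      ih _ fun i hi => hc i (Finset.mem_cons_of_mem hi), map_smul,
      hc a (Finset.mem_cons_self a t), smul_smul, mul_comm]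

lemma card_mul_prod_le_sum_prod_add_mul {G ι : Type*} [Fintype G] [DecidableEq ι]
    (s : Finset ι) (a b : ι → ℝ) (χ : ι → G → ℝ)
    (ha : ∀ i ∈ s, 0 ≤ a i) (hb : ∀ i ∈ s, 0 ≤ b i)
    (hχ : ∀ t ⊆ s, 0 ≤ ∑ g, ∏ i ∈ t, χ i g) :
    Fintype.card G * ∏ i ∈ s, a i ≤ ∑ g, ∏ i ∈ s, (a i + b i * χ i g) := by
  have hexpand : ∑ g, ∏ i ∈ s, (a i + b i * χ i g)
      = ∑ t ∈ s.powerset, (∏ i ∈ t, b i) * (∏ i ∈ s \ t, a i) * ∑ g, ∏ i ∈ t, χ i g := by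
    simp only [add_comm (a _), Finset.prod_add, Finset.prod_mul_distrib]
    rw [Finset.sum_comm]
    simp only [Finset.mul_sum]
    exact Finset.sum_congr rfl fun t _ => Finset.sum_congr rfl fun g _ => by ring
  have hterm : ∀ t ∈ s.powerset,
      0 ≤ (∏ i ∈ t, b i) * (∏ i ∈ s \ t, a i) * ∑ g, ∏ i ∈ t, χ i g := fun t ht => by
    have hts := Finset.mem_powerset.mp ht
    exact mul_nonneg (mul_nonneg (Finset.prod_nonneg fun i hi => hb i (hts hi))
      (Finset.prod_nonneg fun i hi => ha i (Finset.sdiff_subset hi))) (hχ t hts)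
  calc Fintype.card G * ∏ i ∈ s, a i
      = (∏ i ∈ ∅, b i) * (∏ i ∈ s \ ∅, a i) * ∑ g : G, ∏ i ∈ ∅, χ i g := by simp [mul_comm]
    _ ≤ ∑ g, ∏ i ∈ s, (a i + b i * χ i g) :=
      hexpand ▸ Finset.single_le_sum hterm (Finset.empty_mem_powerset s)

lemma exp_neg_le_one_add_exp_neg_two_mul_div_two (x : ℝ) :
    Real.exp (-x) ≤ (1 + Real.exp (-2 * x)) / 2 := by
  have hsq : Real.exp (-2 * x) = Real.exp (-x) ^ 2 := by rw [← Real.exp_nat_mul]; ring_nf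
  nlinarith [sq_nonneg (Real.exp (-x) - 1)]

theorem cII_lower_bound_general {n : ℕ} {ι : Type*} (s : Finset ι)
    (f : ι → (Fin n → Fin 4)) (lam : ι → ℝ)
    (hlam : ∀ i ∈ s, 0 ≤ lam i)
    (hcomm : (s : Set ι).Pairwise fun i j => Commute (GammaL (f i) (lam i)) (GammaL (f j) (lam j))) :
    (cII fun ρ => (s.noncommProd (fun i => GammaL (f i) (lam i)) hcomm) ρ).re
        ≥ ∏ i ∈ s, (1 + Real.exp (-2 * lam i)) / 2 ∧
      (cII fun ρ => (s.noncommProd (fun i => GammaL (f i) (lam i)) hcomm) ρ).re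
        ≥ Real.exp (-∑ i ∈ s, lam i) := by
  classical
  set a : ι → ℝ := fun i => (1 + Real.exp (-2 * lam i)) / 2
  set b : ι → ℝ := fun i => (1 - Real.exp (-2 * lam i)) / 2
  have heigen : ∀ g, s.noncommProd (fun i => GammaL (f i) (lam i)) hcomm (PauliOp g)
      = ((∏ i ∈ s, (a i + b i * pauliOpSign g (f i)) : ℝ) : ℂ) • PauliOp g := fun g => by
    rw [Finset.noncommProd_apply_of_forall_eq_smul _ _ _ _ _
      fun i _ => GammaL_apply_PauliOp (f i) (lam i) g, Complex.ofReal_prod]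
  have hb : ∀ i ∈ s, 0 ≤ b i := fun i hi => by
    have := Real.exp_le_one_iff.mpr (by linarith [hlam i hi] : -2 * lam i ≤ 0)
    simp only [b]; linarith
  have hmain : ∏ i ∈ s, a i ≤ ((4 : ℝ) ^ n)⁻¹ * ∑ g, ∏ i ∈ s, (a i + b i * pauliOpSign g (f i)) := by
    rw [le_inv_mul_iff₀ (by positivity)]
    simpa [Fintype.card_fun] using card_mul_prod_le_sum_prod_add_mul s a b
      (fun i g => pauliOpSign g (f i)) (fun i _ => by positivity) hb
      fun t _ => sum_prod_pauliOpSign_nonneg t f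
  rw [cII_eq_of_apply_PauliOp_eq_smul _ _ heigen, Complex.ofReal_re]
  refine ⟨hmain, le_trans ?_ hmain⟩
  rw [← Finset.sum_neg_distrib, Real.exp_sum]
  exact Finset.prod_le_prod (fun i _ => (Real.exp_pos _).le)
    fun i _ => exp_neg_le_one_add_exp_neg_two_mul_div_two (lam i)

/-- Lemma 1: for `Λ = ∏_P Γ_P^{λ_P}` over distinct nontrivial Paulis,
`c_{I,I} ≥ ∏_P (1+e^{-2λ_P})/2 ≥ exp(-∑_P λ_P)`. -/
theorem cII_lower_bound {n : ℕ} {ι : Type*} (s : Finset ι)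
    (f : ι → (Fin n → Fin 4)) (lam : ι → ℝ)
    (hinj : Set.InjOn f s) (hnontriv : ∀ i ∈ s, f i ≠ fun _ => 0)
    (hlam : ∀ i ∈ s, 0 ≤ lam i)
    (hcomm : (s : Set ι).Pairwise fun i j => Commute (GammaL (f i) (lam i)) (GammaL (f j) (lam j))) :
    (cII fun ρ => (s.noncommProd (fun i => GammaL (f i) (lam i)) hcomm) ρ).re
        ≥ ∏ i ∈ s, (1 + Real.exp (-2 * lam i)) / 2 ∧
      (cII fun ρ => (s.noncommProd (fun i => GammaL (f i) (lam i)) hcomm) ρ).re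
        ≥ Real.exp (-∑ i ∈ s, lam i) :=
  cII_lower_bound_general s f lam hlam hcomm
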